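/- arXiv:2101.00859 — 2 statements merged into one kernel-verified Lean document; each statement's English description precedes it below -/
import Mathlib

section
/- Let q be a prime power, k ≥ 2 a divisor of q−1, and a_0, a_1 ∈ F_q. The cyclotomic map θ = [a_0, a_1, a_1, …, a_1] of index k is a near-linear orthomorphism over F_q if and only if a_0 ≠ a_1, η_k(a_0) = η_k(a_1), and η_k(a_0−1) = η_k(a_1−1). -/
/-- An orthomorphism over a finite field: a permutation `θ` such that
`x ↦ θ x - x` is also a permutation. -/
def IsOrthomorphism {F : Type*} [Field F] [Fintype F] (θ : F → F) : Prop :=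
  Function.Bijective θ ∧ Function.Bijective (fun x => θ x - x)

lemma mulchar_ne_zero {F : Type*} [Field F] (η : MulChar F ℂ) {x : F} (hx : x ≠ 0) :
    η x ≠ 0 := by
  intro h
  have : η x * η x⁻¹ = 1 := by
    rw [← map_mul, mul_inv_cancel₀ hx, map_one]
  rw [h, zero_mul] at this
  exact zero_ne_one this

lemma key_bij {F : Type*} [Field F] [Fintype F] (η : MulChar F ℂ) (hη : η ≠ 1)
    (c₀ c₁ : F) (g : F → F) (hg0 : g 0 = 0)
    (hga : ∀ x : F, x ≠ 0 → η x = 1 → g x = c₀ * x)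
    (hgb : ∀ x : F, x ≠ 0 → η x ≠ 1 → g x = c₁ * x) :
    Function.Bijective g ↔ (c₀ ≠ 0 ∧ c₁ ≠ 0 ∧ η c₀ = η c₁) := by
  constructor
  · rintro ⟨hinj, hsurj⟩
    have hc₀ : c₀ ≠ 0 := by
      intro h
      have h1 : g 1 = 0 := by rw [hga 1 one_ne_zero (map_one η), h, zero_mul]
      exact one_ne_zero (hinj (h1.trans hg0.symm))
    obtain ⟨b, hb⟩ := MulChar.ne_one_iff.mp hη
    have hbne : (b : F) ≠ 0 := b.ne_zero
    have hc₁ : c₁ ≠ 0 := by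
      intro h
      have h1 : g b = 0 := by rw [hgb b hbne hb, h, zero_mul]
      exact hbne (hinj (h1.trans hg0.symm))
    refine ⟨hc₀, hc₁, ?_⟩
    by_contra hne
    obtain ⟨x, hx⟩ := hsurj c₁
    have hxne : x ≠ 0 := by
      intro h; rw [h, hg0] at hx; exact hc₁ hx.symm
    by_cases hx1 : η x = 1
    · rw [hga x hxne hx1] at hx
      apply hne
      calc η c₀ = η c₀ * η x := by rw [hx1, mul_one]
        _ = η (c₀ * x) := (map_mul η c₀ x).symm
        _ = η c₁ := by rw [hx]
    · rw [hgb x hxne hx1] at hx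
      have : x = 1 := by
        have := mul_left_cancel₀ hc₁ (hx.trans (mul_one c₁).symm)
        exact this
      rw [this, map_one η] at hx1
      exact hx1 rfl
  · rintro ⟨hc₀, hc₁, hcc⟩
    rw [Fintype.bijective_iff_injective_and_card]
    refine ⟨?_, rfl⟩
    intro x y hxy
    by_cases hx : x = 0
    · subst hx
      rw [hg0] at hxy
      by_contra hy0
      have hy : y ≠ 0 := fun h => hy0 h.symm
      by_cases hy1 : η y = 1
      · rw [hga y hy hy1] at hxy
        exact hy (by simpa [hc₀] using hxy.symm)
      · rw [hgb y hy hy1] at hxy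
        exact hy (by simpa [hc₁] using hxy.symm)
    · by_cases hy : y = 0
      · subst hy
        rw [hg0] at hxy
        by_cases hx1 : η x = 1
        · rw [hga x hx hx1] at hxy
          exact absurd (by simpa [hc₀] using hxy) hx
        · rw [hgb x hx hx1] at hxy
          exact absurd (by simpa [hc₁] using hxy) hx
      · by_cases hx1 : η x = 1 <;> by_cases hy1 : η y = 1
        · rw [hga x hx hx1, hga y hy hy1] at hxy
          exact mul_left_cancel₀ hc₀ hxy
        · rw [hga x hx hx1, hgb y hy hy1] at hxy
          exfalso
          apply hy1
          have h1 : η (c₀ * x) = η (c₁ * y) := by rw [hxy]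
          rw [map_mul, map_mul, hx1, mul_one, hcc] at h1
          exact mul_left_cancel₀ (mulchar_ne_zero η hc₁) (h1.symm.trans (mul_one (η c₁)).symm)
        · rw [hgb x hx hx1, hga y hy hy1] at hxy
          exfalso
          apply hx1
          have h1 : η (c₁ * x) = η (c₀ * y) := by rw [hxy]
          rw [map_mul, map_mul, hy1, mul_one, hcc] at h1
          exact (mul_left_cancel₀ (mulchar_ne_zero η hc₁) (h1.trans (mul_one (η c₁)).symm))
        · rw [hgb x hx hx1, hgb y hy hy1] at hxy
          exact mul_left_cancel₀ hc₁ hxy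

/-- Lemma 2.4.  Let `η` be a multiplicative character of order `k ≥ 2` of `F_q`,
so the cyclotomy class `C_{k,0}` is `{x ≠ 0 : η x = 1}`.  The cyclotomic map
`θ = [a₀, a₁, a₁, …, a₁]` of index `k` (i.e. `θ 0 = 0`, `θ x = a₀·x` on `C_{k,0}`
and `θ x = a₁·x` on all the other classes) is a near-linear orthomorphism if and
only if `a₀ ≠ a₁`, `η a₀ = η a₁` and `η (a₀ - 1) = η (a₁ - 1)`. -/
theorem lemma_nearlin {F : Type*} [Field F] [Fintype F]
    (k : ℕ) (hk : 2 ≤ k) (hdvd : k ∣ Fintype.card F - 1)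
    (η : MulChar F ℂ) (hη : orderOf η = k)
    (a₀ a₁ : F) (θ : F → F)
    (hθ0 : θ 0 = 0)
    (hθa : ∀ x : F, x ≠ 0 → η x = 1 → θ x = a₀ * x)
    (hθb : ∀ x : F, x ≠ 0 → η x ≠ 1 → θ x = a₁ * x) :
    (IsOrthomorphism θ ∧ a₀ ≠ a₁) ↔
      (a₀ ≠ a₁ ∧ η a₀ = η a₁ ∧ η (a₀ - 1) = η (a₁ - 1)) := by
  have hηne : η ≠ 1 := by
    intro h
    rw [h, orderOf_one] at hη
    omega
  have key1 : Function.Bijective θ ↔ (a₀ ≠ 0 ∧ a₁ ≠ 0 ∧ η a₀ = η a₁) :=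
    key_bij η hηne a₀ a₁ θ hθ0 hθa hθb
  have key2 : Function.Bijective (fun x => θ x - x) ↔
      (a₀ - 1 ≠ 0 ∧ a₁ - 1 ≠ 0 ∧ η (a₀ - 1) = η (a₁ - 1)) := by
    refine key_bij η hηne (a₀ - 1) (a₁ - 1) _ (by simp [hθ0]) ?_ ?_
    · intro x hx h1; simp only [hθa x hx h1]; ring
    · intro x hx h1; simp only [hθb x hx h1]; ring
  have hzero : ∀ a b : F, η a = η b → a = 0 → b = 0 := by
    intro a b hab ha
    subst ha
    by_contra hb
    exact mulchar_ne_zero η hb (hab.symm.trans (η.map_nonunit not_isUnit_zero))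
  unfold IsOrthomorphism
  rw [key1, key2]
  constructor
  · rintro ⟨⟨⟨_, _, h1⟩, ⟨_, _, h2⟩⟩, hne⟩
    exact ⟨hne, h1, h2⟩
  · rintro ⟨hne, h1, h2⟩
    have ha₀ : a₀ ≠ 0 := fun h => hne (h.trans (hzero a₀ a₁ h1 h).symm)
    have ha₁ : a₁ ≠ 0 := fun h => hne ((hzero a₁ a₀ h1.symm h).trans h.symm)
    have hb₀ : a₀ - 1 ≠ 0 := by
      intro h
      have := hzero _ _ h2 h
      apply hne
      have : a₀ = 1 := by linear_combination h
      have h1' : a₁ = 1 := by linear_combination hzero _ _ h2 h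
      rw [this, h1']
    have hb₁ : a₁ - 1 ≠ 0 := by
      intro h
      apply hne
      have : a₁ = 1 := by linear_combination h
      have h0' : a₀ = 1 := by linear_combination hzero _ _ h2.symm h
      rw [this, h0']
    exact ⟨⟨⟨ha₀, ha₁, h1⟩, ⟨hb₀, hb₁, h2⟩⟩, hne⟩
end

section
/- Let q be a prime power and d ≥ 2 an integer with q ≡ 1 (mod d). Then every near-linear cyclotomic orthomorphism θ of index d over F_q is orthogonal to precisely (q − 3d − 1)/d linear orthomorphisms. -/
open Function

section NearLinear

variable {F : Type*} [Field F] {d : ℕ}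

open Classical in
/-- The cyclotomic map `[m₀, m₁, …, m₁]` of index `d`, whose class `C_{d,0}` is the set of nonzero
`d`-th powers. For `d ≠ 0` the value at `0` is `m₀ * 0 = 0`, as `0 = 0 ^ d`. -/
noncomputable def nearLinearMap (d : ℕ) (m₀ m₁ : F) (x : F) : F :=
  if ∃ z : F, x = z ^ d then m₀ * x else m₁ * x

def nonzeroPowers (F : Type*) [Field F] (d : ℕ) : Set F :=
  {x | x ≠ 0 ∧ ∃ z : F, x = z ^ d}

theorem nearLinearMap_apply_of_pow {m₀ m₁ x : F} (hx : ∃ z : F, x = z ^ d) :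
    nearLinearMap d m₀ m₁ x = m₀ * x := if_pos hx

theorem nearLinearMap_apply_of_not_pow {m₀ m₁ x : F} (hx : ¬ ∃ z : F, x = z ^ d) :
    nearLinearMap d m₀ m₁ x = m₁ * x := if_neg hx

theorem nearLinearMap_sub_mul (m₀ m₁ c : F) :
    (fun x => nearLinearMap d m₀ m₁ x - c * x) = nearLinearMap d (m₀ - c) (m₁ - c) := by
  funext x
  unfold nearLinearMap
  split_ifs <;> ring

theorem eq_nearLinearMap (hd : d ≠ 0) {a₀ a₁ : F} {θ : F → F} (hθ0 : θ 0 = 0)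
    (hθa : ∀ x : F, x ≠ 0 → (∃ z : F, x = z ^ d) → θ x = a₀ * x)
    (hθb : ∀ x : F, x ≠ 0 → ¬ (∃ z : F, x = z ^ d) → θ x = a₁ * x) :
    θ = nearLinearMap d a₀ a₁ := by
  funext x
  by_cases hx : x = 0
  · rw [hx, hθ0, nearLinearMap_apply_of_pow ⟨0, (zero_pow hd).symm⟩, mul_zero]
  by_cases hp : ∃ z : F, x = z ^ d
  · rw [hθa x hx hp, nearLinearMap_apply_of_pow hp]
  · rw [hθb x hx hp, nearLinearMap_apply_of_not_pow hp]

/-- When `m₀ / m₁` is a `d`-th power, the map sends powers into `m₁ • C_{d,0}` and non-powers into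
its complement. -/
theorem exists_pow_eq_nearLinearMap_div_iff {m₀ m₁ w : F} (hm₁ : m₁ ≠ 0) (hw : m₀ / m₁ = w ^ d)
    (x : F) : (∃ z : F, nearLinearMap d m₀ m₁ x / m₁ = z ^ d) ↔ ∃ z : F, x = z ^ d := by
  by_cases hx : ∃ z : F, x = z ^ d
  · obtain ⟨z, rfl⟩ := hx
    rw [nearLinearMap_apply_of_pow ⟨z, rfl⟩, mul_div_right_comm, hw, ← mul_pow]
    exact ⟨fun _ => ⟨z, rfl⟩, fun _ => ⟨w * z, rfl⟩⟩
  · rw [nearLinearMap_apply_of_not_pow hx, mul_div_cancel_left₀ _ hm₁]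

theorem nearLinearMap_injective {m₀ m₁ w : F} (hm₀ : m₀ ≠ 0) (hm₁ : m₁ ≠ 0)
    (hw : m₀ / m₁ = w ^ d) : Injective (nearLinearMap d m₀ m₁) := by
  intro x y hxy
  have hxy_pow : (∃ z : F, x = z ^ d) ↔ ∃ z : F, y = z ^ d := by
    rw [← exists_pow_eq_nearLinearMap_div_iff hm₁ hw x, hxy,
      exists_pow_eq_nearLinearMap_div_iff hm₁ hw y]
  by_cases hx : ∃ z : F, x = z ^ d
  · rwa [nearLinearMap_apply_of_pow hx, nearLinearMap_apply_of_pow (hxy_pow.mp hx),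
      mul_right_inj' hm₀] at hxy
  · rwa [nearLinearMap_apply_of_not_pow hx, nearLinearMap_apply_of_not_pow (hxy_pow.not.mp hx),
      mul_right_inj' hm₁] at hxy

theorem bijective_nearLinearMap_iff [Finite F] (hd : d ≠ 0) (hnp : ∃ u : F, ¬ ∃ z, u = z ^ d)
    {m₀ m₁ : F} :
    Bijective (nearLinearMap d m₀ m₁) ↔ m₁ ≠ 0 ∧ m₀ / m₁ ∈ nonzeroPowers F d := by
  have h_one : (∃ z : F, (1 : F) = z ^ d) := ⟨1, (one_pow d).symm⟩
  have h_zero : nearLinearMap d m₀ m₁ 0 = 0 := by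
    rw [nearLinearMap_apply_of_pow ⟨0, (zero_pow hd).symm⟩, mul_zero]
  constructor
  · intro hbij
    obtain ⟨u, hu⟩ := hnp
    have hu0 : u ≠ 0 := fun h => hu ⟨0, by rw [h, zero_pow hd]⟩
    have hm₁ : m₁ ≠ 0 := by
      rintro rfl
      exact hu0 <| hbij.injective <| by
        rw [nearLinearMap_apply_of_not_pow hu, h_zero, zero_mul]
    have hm₀ : m₀ ≠ 0 := by
      rintro rfl
      exact one_ne_zero <| hbij.injective <| by
        rw [nearLinearMap_apply_of_pow h_one, h_zero, zero_mul]
    refine ⟨hm₁, div_ne_zero hm₀ hm₁, ?_⟩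
    by_contra hy
    -- otherwise `m₀ / m₁` and `1` would both be sent to `m₀`
    have : m₀ / m₁ = 1 := hbij.injective <| by
      rw [nearLinearMap_apply_of_not_pow hy, nearLinearMap_apply_of_pow h_one,
        mul_div_cancel₀ _ hm₁, mul_one]
    exact hy ⟨1, by rw [this, one_pow]⟩
  · rintro ⟨hm₁, hy0, w, hw⟩
    exact Finite.injective_iff_bijective.mp
      (nearLinearMap_injective (div_ne_zero_iff.mp hy0).1 hm₁ hw)

theorem nonzeroPowers_eq_image_range (hd : d ≠ 0) :
    nonzeroPowers F d = Units.val '' ((powMonoidHom d : Fˣ →* Fˣ).range : Set Fˣ) := by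
  ext x
  constructor
  · rintro ⟨hx, z, rfl⟩
    have hz : z ≠ 0 := by rintro rfl; exact hx (zero_pow hd)
    exact ⟨Units.mk0 z hz ^ d, ⟨Units.mk0 z hz, rfl⟩, by simp⟩
  · rintro ⟨_, ⟨v, rfl⟩, rfl⟩
    exact ⟨Units.ne_zero _, v, by simp⟩

theorem ncard_nonzeroPowers [Fintype F] (hdvd : d ∣ Fintype.card F - 1) :
    (nonzeroPowers F d).ncard = (Fintype.card F - 1) / d := by
  have hd : d ≠ 0 := by
    rintro rfl
    have := Fintype.one_lt_card (α := F)
    omega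
  rw [nonzeroPowers_eq_image_range hd, Set.ncard_image_of_injective _ Units.val_injective,
    ← Nat.card_coe_set_eq, SetLike.coe_sort_coe, IsCyclic.card_powMonoidHom_range,
    Nat.card_units, Nat.card_eq_fintype_card, Nat.gcd_eq_right hdvd]

theorem exists_not_pow [Fintype F] (hd : 2 ≤ d) (hdvd : d ∣ Fintype.card F - 1) :
    ∃ u : F, ¬ ∃ z, u = z ^ d := by
  by_contra! hall
  have h_univ : nonzeroPowers F d = {0}ᶜ := by
    ext x
    exact ⟨fun hx => hx.1, fun hx => ⟨hx, hall x⟩⟩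
  have hq := Fintype.one_lt_card (α := F)
  have hcard := ncard_nonzeroPowers hdvd
  rw [h_univ, Set.ncard_compl, Set.ncard_singleton, Nat.card_eq_fintype_card] at hcard
  exact (Nat.div_lt_self (by omega) (by omega)).ne' hcard

end NearLinear

section Moebius

variable {F : Type*} [Field F] {a₀ a₁ : F}

theorem sub_div_sub_ne_one (hne : a₀ ≠ a₁) (c : F) : (a₀ - c) / (a₁ - c) ≠ 1 := by
  intro h
  by_cases hc : a₁ - c = 0
  · rw [hc, div_zero] at h
    exact zero_ne_one h
  · exact hne (sub_left_inj.mp ((div_eq_one_iff_eq hc).mp h))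

theorem injOn_sub_div_sub (hne : a₀ ≠ a₁) :
    Set.InjOn (fun c => (a₀ - c) / (a₁ - c)) {c | c ≠ a₁} := by
  intro c hc c' hc' h
  rw [div_eq_div_iff (sub_ne_zero.mpr (Ne.symm hc)) (sub_ne_zero.mpr (Ne.symm hc'))] at h
  have : (a₀ - a₁) * (c - c') = 0 := by linear_combination h
  exact sub_eq_zero.mp ((mul_eq_zero.mp this).resolve_left (sub_ne_zero.mpr hne))

theorem exists_sub_div_sub_eq (hne : a₀ ≠ a₁) {y : F} (hy : y ≠ 1) :
    ∃ c, c ≠ a₁ ∧ (a₀ - c) / (a₁ - c) = y := by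
  have hy1 : y - 1 ≠ 0 := sub_ne_zero.mpr hy
  obtain ⟨c, hc⟩ : ∃ c : F, c * (y - 1) = y * a₁ - a₀ := ⟨_, div_mul_cancel₀ _ hy1⟩
  have h₁ : (a₁ - c) * (y - 1) = a₀ - a₁ := by linear_combination -hc
  have h₁0 : a₁ - c ≠ 0 := by
    rintro h
    rw [h, zero_mul] at h₁
    exact hne (sub_eq_zero.mp h₁.symm)
  have h₀ : a₀ - c = y * (a₁ - c) := by linear_combination hc
  exact ⟨c, fun h => h₁0 (sub_eq_zero.mpr h.symm), by rw [h₀, mul_div_cancel_right₀ _ h₁0]⟩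

theorem ncard_setOf_sub_div_sub_mem (hne : a₀ ≠ a₁) (s : Set F) :
    {c | c ≠ a₁ ∧ (a₀ - c) / (a₁ - c) ∈ s}.ncard = (s \ {1}).ncard := by
  have h_image : (fun c => (a₀ - c) / (a₁ - c)) '' {c | c ≠ a₁ ∧ (a₀ - c) / (a₁ - c) ∈ s} =
      s \ {1} := by
    ext y
    constructor
    · rintro ⟨c, ⟨-, hcs⟩, rfl⟩
      exact ⟨hcs, sub_div_sub_ne_one hne c⟩
    · rintro ⟨hys, hy⟩
      obtain ⟨c, hc, rfl⟩ := exists_sub_div_sub_eq hne hy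
      exact ⟨c, ⟨hc, hys⟩, rfl⟩
  rw [← h_image, ((injOn_sub_div_sub hne).mono fun c hc => hc.1).ncard_image]

end Moebius

/-- Theorem 4.9.  Let `q ≡ 1 (mod d)` with `d ≥ 2`.  Any near-linear orthomorphism
`θ ∈ 𝒟_d(q)` (multiplier `a₀` on the class of nonzero `d`-th powers, common
multiplier `a₁ ≠ a₀` on the remaining classes) is orthogonal to precisely
`(q - 3d - 1)/d` linear orthomorphisms `x ↦ c·x` (with `c ∉ {0, 1}`). -/
theorem thm_1orthnearlin {F : Type*} [Field F] [Fintype F]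
    (d : ℕ) (hd : 2 ≤ d) (hdvd : d ∣ Fintype.card F - 1)
    (a₀ a₁ : F) (hne : a₀ ≠ a₁) (θ : F → F)
    (hθ0 : θ 0 = 0)
    (hθa : ∀ x : F, x ≠ 0 → (∃ z : F, x = z ^ d) → θ x = a₀ * x)
    (hθb : ∀ x : F, x ≠ 0 → ¬ (∃ z : F, x = z ^ d) → θ x = a₁ * x)
    (horth : IsOrthomorphism θ) :
    {c : F | c ≠ 0 ∧ c ≠ 1 ∧ Function.Bijective (fun x => θ x - c * x)}.ncard =
      (Fintype.card F - 3 * d - 1) / d := by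
  have hd0 : d ≠ 0 := by omega
  set T := {c : F | c ≠ a₁ ∧ (a₀ - c) / (a₁ - c) ∈ nonzeroPowers F d}
  have h_bij_iff (c : F) : Bijective (fun x => θ x - c * x) ↔ c ∈ T := by
    rw [eq_nearLinearMap hd0 hθ0 hθa hθb, nearLinearMap_sub_mul,
      bijective_nearLinearMap_iff hd0 (exists_not_pow hd hdvd), sub_ne_zero, ne_comm]
    rfl
  have h0 : (0 : F) ∈ T := (h_bij_iff 0).mp (by simpa using horth.1)
  have h1 : (1 : F) ∈ T := (h_bij_iff 1).mp (by simpa using horth.2)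
  have h_set : {c : F | c ≠ 0 ∧ c ≠ 1 ∧ Bijective (fun x => θ x - c * x)} = T \ {0, 1} := by
    ext c
    simp only [Set.mem_ofPred_eq, h_bij_iff, Set.mem_sdiff, Set.mem_insert_iff,
      Set.mem_singleton_iff]
    tauto
  have h_one : (1 : F) ∈ nonzeroPowers F d := ⟨one_ne_zero, 1, (one_pow d).symm⟩
  rw [h_set, Set.ncard_sdiff (Set.insert_subset h0 (Set.singleton_subset_iff.mpr h1)),
    Set.ncard_pair zero_ne_one, ncard_setOf_sub_div_sub_mem hne,
    Set.ncard_sdiff_singleton_of_mem h_one, ncard_nonzeroPowers hdvd,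
    show Fintype.card F - 3 * d - 1 = Fintype.card F - 1 - d * 3 by omega, Nat.sub_mul_div]
  omega
end
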